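/- Let A be a commutative ring, let n be a natural number, let a be a unit of A, and let b, x, y, z ∈ A. Set x' = a·x, z' = b·x + z, and y' = a⁻¹·(y + Σ_{i=0}^{n} C(n+1, i+1)·b^{i+1}·x^{i}·z^{n−i}), where C(n+1, i+1) denotes the binomial coefficient. Then x'·y' − z'^{n+1} = x·y − z^{n+1}. In particular, if x·y = z^{n+1} then x'·y' = z'^{n+1}. -/
import Mathlib


/-- Let `A` be a commutative ring, `n : ℕ`, `a` a unit of `A` and `b, x, y, z ∈ A`. With
`x' = a·x`, `z' = b·x + z` and
`y' = a⁻¹·(y + ∑_{i=0}^{n} C(n+1, i+1)·b^{i+1}·x^i·z^{n-i})`, one has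
`x'·y' - z'^{n+1} = x·y - z^{n+1}`; in particular `x·y = z^{n+1}` implies
`x'·y' = z'^{n+1}`. -/
theorem an_singularity_automorphism
    {A : Type*} [CommRing A] (n : ℕ) (a : Aˣ) (b x y z : A)
    (x' y' z' : A)
    (hx' : x' = (a : A) * x)
    (hz' : z' = b * x + z)
    (hy' : y' = ((a⁻¹ : Aˣ) : A) *
      (y + ∑ i ∈ Finset.range (n + 1),
        ((n + 1).choose (i + 1) : A) * b ^ (i + 1) * x ^ i * z ^ (n - i))) :
    x' * y' - z' ^ (n + 1) = x * y - z ^ (n + 1) ∧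
      (x * y = z ^ (n + 1) → x' * y' = z' ^ (n + 1)) := by
  set S := ∑ i ∈ Finset.range (n + 1),
      ((n + 1).choose (i + 1) : A) * b ^ (i + 1) * x ^ i * z ^ (n - i) with hS
  have hxy : x' * y' = x * (y + S) := by
    rw [hx', hy']
    have : (a : A) * ((a⁻¹ : Aˣ) : A) = 1 := by
      rw [← Units.val_mul, mul_inv_cancel, Units.val_one]
    calc (a : A) * x * ((↑a⁻¹ : A) * (y + S))
        = (a : A) * ((a⁻¹ : Aˣ) : A) * (x * (y + S)) := by ring
      _ = x * (y + S) := by rw [this, one_mul]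
  have hzp : z' ^ (n + 1) = z ^ (n + 1) + x * S := by
    rw [hz', add_pow, Finset.sum_range_succ']
    simp only [pow_zero, Nat.choose_zero_right, Nat.cast_one, mul_one, one_mul,
      Nat.sub_zero]
    rw [hS, Finset.mul_sum, add_comm]
    congr 1
    apply Finset.sum_congr rfl
    intro i hi
    have hi' : i ≤ n := Nat.lt_succ_iff.mp (Finset.mem_range.mp hi)
    have : n + 1 - (i + 1) = n - i := by omega
    rw [this, mul_pow]
    ring
  constructor
  · rw [hxy, hzp]; ring
  · intro h
    rw [hxy, hzp, mul_add, h]
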